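/- arXiv:math/0611248 — 2 statements merged into one kernel-verified Lean document; each statement's English description precedes it below -/
import Mathlib

section
/- In the setting of the cohomology determinant lemma (f : L × K × K → R skew-symmetric in the K-variables, bases a of K and b of L, determinant d(f,a,b) ∈ S^{n-2} defined by det(θ(i)) = (-1)^i a_i* d(f,a,b)), for any other bases a' of K and b' of L one has d(f,a',b') = [a'/a]·[b'/b]·d(f,a,b), where [a'/a] ∈ R^× denotes the determinant of the change of basis matrix from a to a'. -/
open MvPolynomial

/-- The embedding of `K* = Hom_R(K,R)` into the symmetric algebra
`S(K*) ≅ R[a_1*,…,a_n*]` (realized as `MvPolynomial (Fin n) R`) determined by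
the basis `a` of `K`:  `φ = ∑ i φ(a_i) a_i* ↦ ∑ i φ(a_i) X i`. -/
noncomputable def dualToPoly {R K : Type*} [CommRing R] [AddCommGroup K] [Module R K]
    {n : ℕ} (a : Module.Basis (Fin n) R K) (φ : Module.Dual R K) : MvPolynomial (Fin n) R :=
  ∑ i : Fin n, MvPolynomial.C (φ (a i)) * MvPolynomial.X i

/-! The signed maximal minors `μ(θ)ᵢ = (-1)^i det θ(i)` of a `k × (k + 1)` matrix are the
coefficients of the Laplace expansion `det [v; θ] = v ⬝ᵥ μ(θ)`. Multiplicativity of the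
determinant then gives `μ(P θ) = det P • μ(θ)` and `A *ᵥ μ(θ A) = det A • μ(θ)`.
A change of bases replaces `θ` by `θ' = Bᵀ θ A` with `A = [a'/a]`, `B = [b'/b]`, while the
hypotheses say `μ(θ) = -d • a*` and `μ(θ') = -d' • a'*`. As `A` carries the vector `a'*` of
dual basis elements to `a*`, comparing first coordinates gives `d' a₀* = [a'/a] [b'/b] d a₀*`,
and `a₀*` is a nonzerodivisor of `S(K*)`. -/

open Matrix

namespace Matrix

variable {S : Type*} [CommRing S] {k : ℕ}

def signedMinors (M : Matrix (Fin k) (Fin (k + 1)) S) (i : Fin (k + 1)) : S :=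
  (-1) ^ (i : ℕ) * (M.submatrix id i.succAbove).det

theorem det_of_vecCons_eq_dotProduct (v : Fin (k + 1) → S) (M : Matrix (Fin k) (Fin (k + 1)) S) :
    (of (vecCons v (of.symm M))).det = v ⬝ᵥ signedMinors M := by
  rw [det_succ_row_zero, dotProduct]
  refine Finset.sum_congr rfl fun i _ => ?_
  simp only [signedMinors, of_apply]
  ring_nf
  rfl

theorem signedMinors_mul_left (P : Matrix (Fin k) (Fin k) S) (M : Matrix (Fin k) (Fin (k + 1)) S) :
    signedMinors (P * M) = P.det • signedMinors M := by
  ext i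
  rw [signedMinors, submatrix_mul _ _ _ _ _ Function.bijective_id, submatrix_id_id, det_mul,
    Pi.smul_apply, signedMinors, smul_eq_mul, mul_left_comm]

theorem mulVec_signedMinors_mul_right (M : Matrix (Fin k) (Fin (k + 1)) S)
    (A : Matrix (Fin (k + 1)) (Fin (k + 1)) S) :
    A *ᵥ signedMinors (M * A) = A.det • signedMinors M := by
  ext j
  calc (A *ᵥ signedMinors (M * A)) j = (of (vecCons (A.row j) (of.symm (M * A)))).det :=
        (det_of_vecCons_eq_dotProduct _ _).symm
    _ = (of (vecCons (Pi.single j 1) (of.symm M)) * A).det := by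
        rw [cons_mul, single_one_vecMul, Equiv.apply_symm_apply]
    _ = (A.det • signedMinors M) j := by
        rw [det_mul, det_of_vecCons_eq_dotProduct, single_dotProduct, one_mul, mul_comm]
        rfl

theorem signedMinors_eq_neg_smul {M : Matrix (Fin k) (Fin (k + 1)) S} {u : Fin (k + 1) → S}
    {c : S}
    (h : ∀ i : Fin (k + 1), (M.submatrix id i.succAbove).det = (-1) ^ ((i : ℕ) + 1) * u i * c) :
    signedMinors M = -c • u := by
  ext i
  have hsq : ((-1 : S) ^ (i : ℕ)) ^ 2 = 1 := by rw [← pow_mul, pow_mul', neg_one_sq, one_pow]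
  rw [signedMinors, h, Pi.smul_apply, smul_eq_mul]
  linear_combination (-(u i * c)) * hsq

end Matrix

theorem LinearMap.of_basis_apply_change_basis {R L K S ι κ : Type*} [CommSemiring R]
    [CommSemiring S] [Algebra R S] [AddCommMonoid L] [Module R L] [AddCommMonoid K] [Module R K]
    [Fintype ι] [Fintype κ] (h : L →ₗ[R] K →ₗ[R] S)
    (b b' : Module.Basis ι R L) (a a' : Module.Basis κ R K) :
    of (fun p q => h (b' p) (a' q)) =
      (b.toMatrix b')ᵀ.map (algebraMap R S) * of (fun p q => h (b p) (a q)) *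
        (a.toMatrix a').map (algebraMap R S) := by
  ext p q
  rw [of_apply, ← b.sum_toMatrix_smul_self b' p, ← a.sum_toMatrix_smul_self a' q]
  simp only [map_sum, map_smul, LinearMap.sum_apply, LinearMap.smul_apply, mul_apply, of_apply,
    Matrix.map_apply, transpose_apply, Finset.sum_mul, Finset.mul_sum, Algebra.smul_def]
  refine Finset.sum_congr rfl fun _ _ => Finset.sum_congr rfl fun _ _ => ?_
  ring

section dualToPoly

variable {R K : Type*} [CommRing R] [AddCommGroup K] [Module R K] {n : ℕ}

noncomputable def dualToPolyLinearMap (a : Module.Basis (Fin n) R K) :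
    Module.Dual R K →ₗ[R] MvPolynomial (Fin n) R where
  toFun := dualToPoly a
  map_add' φ ψ := by
    simp only [dualToPoly, LinearMap.add_apply, map_add, add_mul, Finset.sum_add_distrib]
  map_smul' r φ := by
    simp only [dualToPoly, LinearMap.smul_apply, smul_eq_mul, map_mul, RingHom.id_apply,
      Finset.smul_sum, smul_eq_C_mul, mul_assoc]

@[simp]
theorem coe_dualToPolyLinearMap (a : Module.Basis (Fin n) R K) :
    ⇑(dualToPolyLinearMap a) = dualToPoly a :=
  rfl

theorem dualToPoly_dualBasis (a a' : Module.Basis (Fin n) R K) :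
    (fun i => dualToPoly a (a'.dualBasis i)) = (a'.toMatrix a).map C *ᵥ fun l => X l := by
  ext i
  simp only [dualToPoly, Module.Basis.dualBasis_apply, mulVec, dotProduct, Matrix.map_apply,
    Module.Basis.toMatrix_apply]

theorem dualToPoly_dualBasis_self (a : Module.Basis (Fin n) R K) (i : Fin n) :
    dualToPoly a (a.dualBasis i) = X i := by
  rw [congrFun (dualToPoly_dualBasis a a) i, Module.Basis.toMatrix_self,
    Matrix.map_one _ C.map_zero C.map_one, one_mulVec]

end dualToPoly

theorem cohomology_det_change_of_basis_general
    {R K L : Type*} [CommRing R]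
    [AddCommGroup K] [Module R K] [AddCommGroup L] [Module R L]
    {m : ℕ}
    (a a' : Module.Basis (Fin (m + 2)) R K) (b b' : Module.Basis (Fin (m + 1)) R L)
    (f : L →ₗ[R] K →ₗ[R] K →ₗ[R] R)
    (d d' : MvPolynomial (Fin (m + 2)) R)
    (hd : ∀ i : Fin (m + 2),
      ((Matrix.of fun p q => dualToPoly a (f (b p) (a q))).submatrix id i.succAbove).det
        = (-1) ^ ((i : ℕ) + 1) * dualToPoly a (a.dualBasis i) * d)
    (hd' : ∀ i : Fin (m + 2),
      ((Matrix.of fun p q => dualToPoly a (f (b' p) (a' q))).submatrix id i.succAbove).det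
        = (-1) ^ ((i : ℕ) + 1) * dualToPoly a (a'.dualBasis i) * d') :
    d' = MvPolynomial.C (a.toMatrix a').det * MvPolynomial.C (b.toMatrix b').det * d := by
  have hθ := (f.compr₂ (dualToPolyLinearMap a)).of_basis_apply_change_basis b b' a a'
  simp only [LinearMap.compr₂_apply, coe_dualToPolyLinearMap, algebraMap_eq] at hθ
  have hdetA : ((a.toMatrix a').map C).det = C (σ := Fin (m + 2)) (a.toMatrix a').det :=
    (C.map_det _).symm
  have hdetB : ((b.toMatrix b')ᵀ.map C).det = C (σ := Fin (m + 2)) (b.toMatrix b').det := by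
    rw [← det_transpose (b.toMatrix b'), C.map_det]
    rfl
  have key := congrArg (fun M => (a.toMatrix a').map C *ᵥ signedMinors M) hθ
  simp only [dualToPoly_dualBasis_self] at hd
  simp only [mulVec_signedMinors_mul_right, signedMinors_mul_left, hdetA, hdetB,
    signedMinors_eq_neg_smul hd, signedMinors_eq_neg_smul hd'] at key
  rw [dualToPoly_dualBasis, mulVec_smul, mulVec_mulVec, ← Matrix.map_mul,
    a.toMatrix_mul_toMatrix_flip, Matrix.map_one _ C.map_zero C.map_one, one_mulVec] at key
  have key₀ := congrFun key 0
  simp only [Pi.smul_apply, smul_eq_mul] at key₀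
  rw [← X_mul_cancel_right_iff (i := 0)]
  linear_combination -key₀

/-- (Change of basis formula for the cohomology determinant.)
With `f : L × K × K → R` skew-symmetric in the `K`-variables,
`θ(a,b)_{i,j} = g(b_i, a_j) = f(b_i, a_j, ·) ∈ K* ⊆ S(K*)`, and
`d = d(f,a,b)`, `d' = d(f,a',b')` the determinants characterized by
`det θ(i) = (-1)^i a_i* d` (0-based indices, whence `(-1)^(i+1)`), one has
`d(f,a',b') = [a'/a]·[b'/b]·d(f,a,b)`, where `[a'/a]` is the determinant of
the change of basis matrix (equal to `det (a.toMatrix a')`). -/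
theorem cohomology_det_change_of_basis
    {R K L : Type*} [CommRing R] [IsDomain R]
    [AddCommGroup K] [Module R K] [AddCommGroup L] [Module R L]
    {m : ℕ}
    (a a' : Module.Basis (Fin (m + 2)) R K) (b b' : Module.Basis (Fin (m + 1)) R L)
    (f : L →ₗ[R] K →ₗ[R] K →ₗ[R] R)
    (hskew : ∀ (x : L) (y z : K), f x y z = - f x z y)
    (d d' : MvPolynomial (Fin (m + 2)) R)
    (hd : ∀ i : Fin (m + 2),
      ((Matrix.of fun p q => dualToPoly a (f (b p) (a q))).submatrix id i.succAbove).det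
        = (-1) ^ ((i : ℕ) + 1) * dualToPoly a (a.dualBasis i) * d)
    (hd' : ∀ i : Fin (m + 2),
      ((Matrix.of fun p q => dualToPoly a (f (b' p) (a' q))).submatrix id i.succAbove).det
        = (-1) ^ ((i : ℕ) + 1) * dualToPoly a (a'.dualBasis i) * d') :
    d' = MvPolynomial.C (a.toMatrix a').det * MvPolynomial.C (b.toMatrix b').det * d :=
  cohomology_det_change_of_basis_general a a' b b' f d d' hd hd'
end

section
/- Let M be a compact connected oriented 3-manifold whose boundary is a single torus T (∂M = T), and let M̄ = M ∪_T Z be the closed manifold obtained by gluing a solid torus Z along T, with b_1(M̄) = b_1(M) - 1. Then (ι_M)_*(Det_ω(f_M)) = 0 in S(H^1(M̄)*), where f_M(x,y,z) = ⟨x ∪ y ∪ z, [M]⟩ for x ∈ H^1(M,∂M), y,z ∈ H^1(M), and (ι_M)_* : S(H^1(M)*) → S(H^1(M̄)*) is induced by inclusion. -/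
/-!
Substitute `X (n-1) ↦ 0` in the defining identity `det θ(0) = -X₀ · d`. Since `a_k = ι(b_k)`
for `k < n-1`, column `j` of the substituted matrix becomes `Aⱼ *ᵥ X` with
`(Aⱼ)ₚₖ = f(b_p, a_{j+1}, ι b_k)`, and `Aⱼ` is antisymmetric by `hanti`. Hence
`(X ᵥ* θ)ⱼ = X ⬝ᵥ Aⱼ *ᵥ X = 0`, the substituted determinant vanishes, and
`X₀ · (ι_M)_* d = 0` forces `(ι_M)_* d = 0`.
-/

open MvPolynomial
open scoped Matrix

theorem Matrix.dotProduct_mulVec_self_eq_zero_of_transpose_eq_neg {n R : Type*} [Fintype n]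
    [CommRing R] [NoZeroDivisors R] [CharZero R] {A : Matrix n n R} (hA : Aᵀ = -A)
    (v : n → R) : v ⬝ᵥ A *ᵥ v = 0 :=
  CharZero.eq_neg_self_iff.mp <| calc
    v ⬝ᵥ A *ᵥ v = v ⬝ᵥ Aᵀ *ᵥ v := (dotProduct_transpose_mulVec A v v).symm
    _ = -(v ⬝ᵥ A *ᵥ v) := by rw [hA, Matrix.neg_mulVec, dotProduct_neg]

theorem Matrix.det_eq_zero_of_col_eq_mulVec_of_transpose_eq_neg {n R : Type*} [Fintype n]
    [DecidableEq n] [CommRing R] [IsDomain R] [CharZero R] {B : Matrix n n R}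
    {A : n → Matrix n n R} (hA : ∀ j, (A j)ᵀ = -A j) {v : n → R} (hv : v ≠ 0)
    (hB : ∀ i j, B i j = (A j *ᵥ v) i) : B.det = 0 :=
  Matrix.exists_vecMul_eq_zero_iff.mp ⟨v, hv, funext fun j => by
    simpa only [vecMul, dotProduct, hB, Pi.zero_apply] using
      dotProduct_mulVec_self_eq_zero_of_transpose_eq_neg (hA j) v⟩

theorem MvPolynomial.aeval_snoc_zero_sum_C_mul_X {R : Type*} [CommSemiring R] {n : ℕ}
    (c : Fin (n + 1) → R) :
    aeval (Fin.snoc (fun i : Fin n => (X i : MvPolynomial (Fin n) R)) 0)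
        (∑ k, C (c k) * X k) = ∑ k : Fin n, C (c k.castSucc) * X k := by
  simp [Fin.sum_univ_castSucc, Fin.snoc_castSucc, Fin.snoc_last]

theorem pushforward_det_vanishes_when_b1_drops_general
    {K L : Type*} [AddCommGroup K] [Module ℤ K] [AddCommGroup L] [Module ℤ L]
    {N : ℕ}
    (a : Module.Basis (Fin (N + 2)) ℤ K) (b : Module.Basis (Fin (N + 1)) ℤ L)
    (f : L →ₗ[ℤ] K →ₗ[ℤ] K →ₗ[ℤ] ℤ)
    (ι : L →ₗ[ℤ] K)
    (hcompat : ∀ i : Fin (N + 1), ι (b i) = a (Fin.castSucc i))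
    (hanti : ∀ (i k : Fin (N + 1)) (y : K),
      f (b i) y (ι (b k)) = - f (b k) y (ι (b i)))
    (d : MvPolynomial (Fin (N + 2)) ℤ)
    (hd : ∀ i : Fin (N + 2),
      ((Matrix.of fun p q =>
          ∑ k : Fin (N + 2),
            MvPolynomial.C (f (b p) (a q) (a k)) * MvPolynomial.X k).submatrix
        id i.succAbove).det
        = (-1) ^ ((i : ℕ) + 1) * MvPolynomial.X i * d) :
    MvPolynomial.aeval
        (Fin.snoc (fun i : Fin (N + 1) =>
            (MvPolynomial.X i : MvPolynomial (Fin (N + 1)) ℤ)) 0) d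
      = 0 := by
  set φ : MvPolynomial (Fin (N + 2)) ℤ →ₐ[ℤ] MvPolynomial (Fin (N + 1)) ℤ :=
    aeval (Fin.snoc (fun i : Fin (N + 1) => (X i : MvPolynomial (Fin (N + 1)) ℤ)) 0)
  set A : Fin (N + 1) → Matrix (Fin (N + 1)) (Fin (N + 1)) (MvPolynomial (Fin (N + 1)) ℤ) :=
    fun j => (Matrix.of fun p k => f (b p) (a j.succ) (ι (b k))).map C
  have hA : ∀ j, (A j)ᵀ = -A j := fun j => by
    ext p k
    simp [A, hanti k p]
  have hdet : φ ((Matrix.of fun p q => ∑ k : Fin (N + 2), C (f (b p) (a q) (a k)) * X k)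
      |>.submatrix id (0 : Fin (N + 2)).succAbove).det = 0 := by
    rw [AlgHom.map_det]
    refine Matrix.det_eq_zero_of_col_eq_mulVec_of_transpose_eq_neg hA
      (v := fun k => X k) (fun h => X_ne_zero 0 (congrFun h 0)) fun p j => ?_
    simp only [φ, AlgHom.mapMatrix_apply, Matrix.map_apply, Matrix.submatrix_apply, id,
      Matrix.of_apply, Fin.succAbove_zero, aeval_snoc_zero_sum_C_mul_X, ← hcompat]
    rfl
  have h0 := congrArg φ (hd 0)
  rw [hdet] at h0
  simpa [φ, X_ne_zero] using h0.symm

/-- (Theorem 3.1, Item 2.)  Let `M` be a compact connected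
oriented 3-manifold with `∂M = T` a single torus, and `M̄ = M ∪_T Z` closed
with `b_1(M̄) = b_1(M) - 1` (and `b_1(M̄) ≥ 3`, so `n = b_1(M) ≥ 4`).  Then
`(ι_M)_*(Det_ω(f_M)) = 0` in `S(H^1(M̄)*)`.

Encoding (cohomology of manifolds is not in Mathlib): `K = H^1(M)` and
`L = H^1(M,∂M)` are free ℤ-modules of ranks `n = N+2` and `n-1 = N+1`;
`f = f_M` with `f(x,y,z) = ⟨x ∪ y ∪ z, [M]⟩`, skew-symmetric in the last two
variables; `ι : L → K` is the map `H^1(M,∂M) → H^1(M)`, which here (case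
`b_1(M̄) = b_1(M) - 1`) is injective, and the bases are chosen as in the paper
with `a_i = ι(b_i)` for `i ≤ n-1` (`hcompat`).  The hypothesis `hanti` records
that `f(b_i, y, ι(b_k)) = ⟨b_i ∪ y ∪ b_k-lift, [M]⟩` is antisymmetric in
`(i,k)`, since `b_i ∪ b_k` is antisymmetric — the key fact of the proof.
`S(H^1(M)*)` is realized as `MvPolynomial (Fin (N+2)) ℤ` via the basis `a`
(variables `a_i* ↦ X i`), `d` is the determinant `d(f_M,a,b)` characterized by
`det θ(i) = (-1)^i a_i* d` (0-based, whence `(-1)^(i+1)`), and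
`(ι_M)_* : S(H^1(M)*) → S(H^1(M̄)*)` is, in the bases chosen in the paper, the
substitution `X i ↦ X i` (`i < n-1`), `X (n-1) ↦ 0`.  Since
`Det_ω(f_M) = ± d(f_M,a,b)`, the claim `(ι_M)_*(Det_ω(f_M)) = 0` is exactly
`(ι_M)_*(d) = 0`. -/
theorem pushforward_det_vanishes_when_b1_drops
    {K L : Type*} [AddCommGroup K] [Module ℤ K] [AddCommGroup L] [Module ℤ L]
    {N : ℕ} (hN : 2 ≤ N)
    (a : Module.Basis (Fin (N + 2)) ℤ K) (b : Module.Basis (Fin (N + 1)) ℤ L)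
    (f : L →ₗ[ℤ] K →ₗ[ℤ] K →ₗ[ℤ] ℤ)
    (hskew : ∀ (x : L) (y z : K), f x y z = - f x z y)
    (ι : L →ₗ[ℤ] K)
    (hcompat : ∀ i : Fin (N + 1), ι (b i) = a (Fin.castSucc i))
    (hanti : ∀ (i k : Fin (N + 1)) (y : K),
      f (b i) y (ι (b k)) = - f (b k) y (ι (b i)))
    (d : MvPolynomial (Fin (N + 2)) ℤ)
    (hd : ∀ i : Fin (N + 2),
      ((Matrix.of fun p q =>
          ∑ k : Fin (N + 2),
            MvPolynomial.C (f (b p) (a q) (a k)) * MvPolynomial.X k).submatrix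
        id i.succAbove).det
        = (-1) ^ ((i : ℕ) + 1) * MvPolynomial.X i * d) :
    MvPolynomial.aeval
        (Fin.snoc (fun i : Fin (N + 1) =>
            (MvPolynomial.X i : MvPolynomial (Fin (N + 1)) ℤ)) 0) d
      = 0 :=
  pushforward_det_vanishes_when_b1_drops_general a b f ι hcompat hanti d hd
end
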